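/- Let 𝒴 ⊂ ℝ be a finite set, let 𝒜, 𝒢₁, 𝒢₂, ℬ₂ be finite types, let p be a strictly positive probability mass function on 𝒴 × 𝒜 × 𝒢₁ × 𝒢₂ × ℬ₂, and fix a ∈ 𝒜. If G₂ ⊥ (A, G₁) | B₂ under p, then Var_p( ψ_a^{G₁,B₂}(Y,A,G₁,B₂) ) = Var_p( ψ_a^{G₁,(G₂,B₂)}(Y,A,G₁,G₂,B₂) ) + Var_p( ψ_a^{G₁,B₂}(Y,A,G₁,B₂) − ψ_a^{G₁,(G₂,B₂)}(Y,A,G₁,G₂,B₂) ); in particular, Var_p( ψ_a^{G₁,B₂} ) ≥ Var_p( ψ_a^{G₁,(G₂,B₂)} ). -/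

import Mathlib

open Finset

noncomputable section

variable {Y : Finset ℝ} {A G₁ G₂ B₂ : Type}
variable [Fintype A] [Fintype G₁] [Fintype G₂] [Fintype B₂] [DecidableEq A]

/-- Marginal `p(g₁)`. -/
def pG1 (p : Y × A × G₁ × G₂ × B₂ → ℝ) (g₁ : G₁) : ℝ :=
  ∑ y : Y, ∑ a : A, ∑ g₂ : G₂, ∑ b₂ : B₂, p (y, a, g₁, g₂, b₂)

/-- Marginal `p(g₂)`. -/
def pG2 (p : Y × A × G₁ × G₂ × B₂ → ℝ) (g₂ : G₂) : ℝ :=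
  ∑ y : Y, ∑ a : A, ∑ g₁ : G₁, ∑ b₂ : B₂, p (y, a, g₁, g₂, b₂)

/-- Marginal `p(b₂)`. -/
def pB2 (p : Y × A × G₁ × G₂ × B₂ → ℝ) (b₂ : B₂) : ℝ :=
  ∑ y : Y, ∑ a : A, ∑ g₁ : G₁, ∑ g₂ : G₂, p (y, a, g₁, g₂, b₂)

/-- Marginal `p(g₂, b₂)`. -/
def pG2B2 (p : Y × A × G₁ × G₂ × B₂ → ℝ) (g₂ : G₂) (b₂ : B₂) : ℝ :=
  ∑ y : Y, ∑ a : A, ∑ g₁ : G₁, p (y, a, g₁, g₂, b₂)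

/-- Marginal `p(a, g₁, b₂)`. -/
def pAG1B2 (p : Y × A × G₁ × G₂ × B₂ → ℝ) (a : A) (g₁ : G₁) (b₂ : B₂) : ℝ :=
  ∑ y : Y, ∑ g₂ : G₂, p (y, a, g₁, g₂, b₂)

/-- Marginal `p(a, g₁, g₂, b₂)`. -/
def pAG1G2B2 (p : Y × A × G₁ × G₂ × B₂ → ℝ) (a : A) (g₁ : G₁) (g₂ : G₂) (b₂ : B₂) : ℝ :=
  ∑ y : Y, p (y, a, g₁, g₂, b₂)

/-- Marginal `p(a, g₁, g₂)`. -/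
def pAG1G2 (p : Y × A × G₁ × G₂ × B₂ → ℝ) (a : A) (g₁ : G₁) (g₂ : G₂) : ℝ :=
  ∑ y : Y, ∑ b₂ : B₂, p (y, a, g₁, g₂, b₂)

/-- Outcome regression `m₁(g₁,b₂) = ∑_y y·p(y | a, g₁, b₂)` for the
adjustment set `(G₁, B₂)`. -/
def m1 (p : Y × A × G₁ × G₂ × B₂ → ℝ) (a : A) (g₁ : G₁) (b₂ : B₂) : ℝ :=
  ∑ y : Y, (y : ℝ) * ((∑ g₂ : G₂, p (y, a, g₁, g₂, b₂)) / pAG1B2 p a g₁ b₂)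

/-- Outcome regression `m₂(g₁,g₂,b₂) = ∑_y y·p(y | a, g₁, g₂, b₂)` for the
adjustment set `(G₁, (G₂, B₂))`. -/
def m2 (p : Y × A × G₁ × G₂ × B₂ → ℝ) (a : A) (g₁ : G₁) (g₂ : G₂) (b₂ : B₂) : ℝ :=
  ∑ y : Y, (y : ℝ) * (p (y, a, g₁, g₂, b₂) / pAG1G2B2 p a g₁ g₂ b₂)

/-- Outcome regression `m₃(g₁,g₂) = ∑_y y·p(y | a, g₁, g₂)` for the
adjustment set `(G₁, G₂)`. -/
def m3 (p : Y × A × G₁ × G₂ × B₂ → ℝ) (a : A) (g₁ : G₁) (g₂ : G₂) : ℝ :=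
  ∑ y : Y, (y : ℝ) * ((∑ b₂ : B₂, p (y, a, g₁, g₂, b₂)) / pAG1G2 p a g₁ g₂)

/-- Target parameter for the adjustment set `(G₁, B₂)`. -/
def T1 (p : Y × A × G₁ × G₂ × B₂ → ℝ) (a : A) : ℝ :=
  ∑ g₁ : G₁, pG1 p g₁ * ∑ b₂ : B₂, pB2 p b₂ * m1 p a g₁ b₂

/-- Target parameter for the adjustment set `(G₁, (G₂, B₂))`. -/
def T2 (p : Y × A × G₁ × G₂ × B₂ → ℝ) (a : A) : ℝ :=
  ∑ g₁ : G₁, pG1 p g₁ * ∑ g₂ : G₂, ∑ b₂ : B₂, pG2B2 p g₂ b₂ * m2 p a g₁ g₂ b₂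

/-- Target parameter for the adjustment set `(G₁, G₂)`. -/
def T3 (p : Y × A × G₁ × G₂ × B₂ → ℝ) (a : A) : ℝ :=
  ∑ g₁ : G₁, pG1 p g₁ * ∑ g₂ : G₂, pG2 p g₂ * m3 p a g₁ g₂

/-- Influence function `ψ_a^{G₁,B₂}` for the adjustment set `(G₁, B₂)`. -/
def psi1 (p : Y × A × G₁ × G₂ × B₂ → ℝ) (a : A)
    (y : Y) (a' : A) (g₁ : G₁) (b₂ : B₂) : ℝ :=
  (if a' = a then (1 : ℝ) else 0) * (pG1 p g₁ * pB2 p b₂ / pAG1B2 p a g₁ b₂) *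
      ((y : ℝ) - m1 p a g₁ b₂)
    + (∑ b₂' : B₂, pB2 p b₂' * m1 p a g₁ b₂')
    + (∑ g₁' : G₁, pG1 p g₁' * m1 p a g₁' b₂)
    - 2 * T1 p a

/-- Influence function `ψ_a^{G₁,(G₂,B₂)}` for the adjustment set `(G₁, (G₂, B₂))`. -/
def psi2 (p : Y × A × G₁ × G₂ × B₂ → ℝ) (a : A)
    (y : Y) (a' : A) (g₁ : G₁) (g₂ : G₂) (b₂ : B₂) : ℝ :=
  (if a' = a then (1 : ℝ) else 0) *
      (pG1 p g₁ * pG2B2 p g₂ b₂ / pAG1G2B2 p a g₁ g₂ b₂) *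
      ((y : ℝ) - m2 p a g₁ g₂ b₂)
    + (∑ g₂' : G₂, ∑ b₂' : B₂, pG2B2 p g₂' b₂' * m2 p a g₁ g₂' b₂')
    + (∑ g₁' : G₁, pG1 p g₁' * m2 p a g₁' g₂ b₂)
    - 2 * T2 p a

/-- Influence function `ψ_a^{G₁,G₂}` for the adjustment set `(G₁, G₂)`. -/
def psi3 (p : Y × A × G₁ × G₂ × B₂ → ℝ) (a : A)
    (y : Y) (a' : A) (g₁ : G₁) (g₂ : G₂) : ℝ :=
  (if a' = a then (1 : ℝ) else 0) * (pG1 p g₁ * pG2 p g₂ / pAG1G2 p a g₁ g₂) *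
      ((y : ℝ) - m3 p a g₁ g₂)
    + (∑ g₂' : G₂, pG2 p g₂' * m3 p a g₁ g₂')
    + (∑ g₁' : G₁, pG1 p g₁' * m3 p a g₁' g₂)
    - 2 * T3 p a

/-- Conditional independence `G₂ ⊥ (A, G₁) | B₂` under `p`. -/
def CI_G2_AG1_B2 (p : Y × A × G₁ × G₂ × B₂ → ℝ) : Prop :=
  ∀ (g₂ : G₂) (a : A) (g₁ : G₁) (b₂ : B₂),
    (∑ y : Y, p (y, a, g₁, g₂, b₂)) / pB2 p b₂ =
      (pG2B2 p g₂ b₂ / pB2 p b₂) * (pAG1B2 p a g₁ b₂ / pB2 p b₂)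

/-- Conditional independence `Y ⊥ B₂ | (A, G₁, G₂)` under `p`. -/
def CI_Y_B2_AG1G2 (p : Y × A × G₁ × G₂ × B₂ → ℝ) : Prop :=
  ∀ (y : Y) (a : A) (g₁ : G₁) (g₂ : G₂) (b₂ : B₂),
    p (y, a, g₁, g₂, b₂) / pAG1G2 p a g₁ g₂ =
      ((∑ b₂' : B₂, p (y, a, g₁, g₂, b₂')) / pAG1G2 p a g₁ g₂) *
        (pAG1G2B2 p a g₁ g₂ b₂ / pAG1G2 p a g₁ g₂)

/-- Variance of a real function of the observation under `p`. -/
def VarP (p : Y × A × G₁ × G₂ × B₂ → ℝ) (f : Y × A × G₁ × G₂ × B₂ → ℝ) : ℝ :=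
  (∑ o : Y × A × G₁ × G₂ × B₂, p o * f o ^ 2) -
    (∑ o : Y × A × G₁ × G₂ × B₂, p o * f o) ^ 2

/-!
Write `Δ = ψ₁ − ψ₂`. Under `G₂ ⊥ (A, G₁) | B₂` the inverse-probability weights of the two
influence functions agree, `m₁(g₁, b₂)` is the `p(g₂ | b₂)`-average of `m₂(g₁, g₂, b₂)` and
`T₁ = T₂`, so `Δ = 1{A = a}·w·(m₂ − m₁) + gap(G₂, B₂)` is a function of `(A, G₁, G₂, B₂)`.
Split `ψ₂` into the residual `1{A = a}·w·(Y − m₂)`, orthogonal to every function of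
`(A, G₁, G₂, B₂)`, and `c(G₁) + d(G₂, B₂)`. Averaging out `G₁` shows that `Δ` is orthogonal to
every `d(G₂, B₂)`, and the independence of `G₂` and `G₁` given `B₂` that it is orthogonal to every
`c(G₁)`. Hence `E[Δ] = 0` and `E[ψ₂ Δ] = 0`, and the variance of `ψ₁ = ψ₂ + Δ` is the sum of the
variances.
-/

-- Drops the instance variables of the `noncomputable section`, so that each lemma below assumes
-- only the instances it uses.
end

variable {Y : Finset ℝ} {A G₁ G₂ B₂ : Type}

lemma mul_sum_mul_div {ι : Type*} (s : Finset ι) (x q : ι → ℝ) {S : ℝ} (hS : S ≠ 0) :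
    S * ∑ i ∈ s, x i * (q i / S) = ∑ i ∈ s, x i * q i := by
  rw [mul_sum]
  exact sum_congr rfl fun i _ => by field_simp

lemma sum_obs_eq_sum_g₁_g₂_b₂_a_y {M : Type*} [AddCommMonoid M] [Fintype A] [Fintype G₁]
    [Fintype G₂] [Fintype B₂] (F : Y × A × G₁ × G₂ × B₂ → M) :
    ∑ o, F o = ∑ g₁, ∑ g₂, ∑ b₂, ∑ a', ∑ y, F (y, a', g₁, g₂, b₂) := by
  let e : G₁ × G₂ × B₂ × A × Y ≃ Y × A × G₁ × G₂ × B₂ :=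
    { toFun := fun o => (o.2.2.2.2, o.2.2.2.1, o.1, o.2.1, o.2.2.1)
      invFun := fun o => (o.2.2.1, o.2.2.2.1, o.2.2.2.2, o.2.1, o.1)
      left_inv := fun _ => rfl
      right_inv := fun _ => rfl }
  rw [← e.sum_comp]
  simp only [Fintype.sum_prod_type]
  rfl

section Marginals

variable (p : Y × A × G₁ × G₂ × B₂ → ℝ)

noncomputable def pG1G2B2 [Fintype A] (g₁ : G₁) (g₂ : G₂) (b₂ : B₂) : ℝ :=
  ∑ a', pAG1G2B2 p a' g₁ g₂ b₂

lemma sum_pAG1G2B2 [Fintype G₂] (a : A) (g₁ : G₁) (b₂ : B₂) :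
    ∑ g₂, pAG1G2B2 p a g₁ g₂ b₂ = pAG1B2 p a g₁ b₂ := by
  simp only [pAG1G2B2, pAG1B2]
  exact sum_comm

lemma sum_pG2B2 [Fintype A] [Fintype G₁] [Fintype G₂] (b₂ : B₂) :
    ∑ g₂, pG2B2 p g₂ b₂ = pB2 p b₂ := by
  simp only [pG2B2, pB2]
  exact sum_comm.trans (sum_congr rfl fun _ _ => sum_comm.trans (sum_congr rfl fun _ _ => sum_comm))

lemma sum_pG1G2B2 [Fintype A] [Fintype G₁] (g₂ : G₂) (b₂ : B₂) :
    ∑ g₁, pG1G2B2 p g₁ g₂ b₂ = pG2B2 p g₂ b₂ := by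
  simp only [pG1G2B2, pAG1G2B2, pG2B2]
  exact (sum_congr rfl fun _ _ => sum_comm).trans
    (sum_comm.trans (sum_congr rfl fun _ _ => sum_comm))

end Marginals

section Regressions

variable (p : Y × A × G₁ × G₂ × B₂ → ℝ)

lemma pAG1G2B2_pos [Nonempty Y] (hpos : ∀ o, 0 < p o) (a : A) (g₁ : G₁) (g₂ : G₂) (b₂ : B₂) :
    0 < pAG1G2B2 p a g₁ g₂ b₂ :=
  sum_pos (fun _ _ => hpos _) univ_nonempty

lemma pAG1B2_pos [Fintype G₂] [Nonempty Y] [Nonempty G₂] (hpos : ∀ o, 0 < p o) (a : A)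
    (g₁ : G₁) (b₂ : B₂) : 0 < pAG1B2 p a g₁ b₂ := by
  rw [← sum_pAG1G2B2]
  exact sum_pos (fun _ _ => pAG1G2B2_pos p hpos _ _ _ _) univ_nonempty

lemma pB2_pos [Fintype A] [Fintype G₁] [Fintype G₂] [Nonempty Y] [Nonempty A] [Nonempty G₁]
    [Nonempty G₂] (hpos : ∀ o, 0 < p o) (b₂ : B₂) : 0 < pB2 p b₂ :=
  sum_pos (fun _ _ => sum_pos (fun _ _ => sum_pos (fun _ _ => sum_pos (fun _ _ => hpos _)
    univ_nonempty) univ_nonempty) univ_nonempty) univ_nonempty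

lemma pAG1G2B2_mul_m2 [Nonempty Y] (hpos : ∀ o, 0 < p o) (a : A) (g₁ : G₁) (g₂ : G₂)
    (b₂ : B₂) : pAG1G2B2 p a g₁ g₂ b₂ * m2 p a g₁ g₂ b₂ = ∑ y : Y, (y : ℝ) * p (y, a, g₁, g₂, b₂) :=
  mul_sum_mul_div _ _ _ (pAG1G2B2_pos p hpos a g₁ g₂ b₂).ne'

lemma pAG1B2_mul_m1 [Fintype G₂] [Nonempty Y] [Nonempty G₂] (hpos : ∀ o, 0 < p o) (a : A)
    (g₁ : G₁) (b₂ : B₂) :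
    pAG1B2 p a g₁ b₂ * m1 p a g₁ b₂ = ∑ g₂, pAG1G2B2 p a g₁ g₂ b₂ * m2 p a g₁ g₂ b₂ := by
  rw [m1, mul_sum_mul_div _ _ _ (pAG1B2_pos p hpos a g₁ b₂).ne']
  simp only [pAG1G2B2_mul_m2 p hpos, mul_sum]
  exact sum_comm

lemma sum_mul_sub_m2 [Nonempty Y] (hpos : ∀ o, 0 < p o) (a : A) (g₁ : G₁) (g₂ : G₂)
    (b₂ : B₂) : ∑ y : Y, p (y, a, g₁, g₂, b₂) * ((y : ℝ) - m2 p a g₁ g₂ b₂) = 0 := by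
  have h := pAG1G2B2_mul_m2 p hpos a g₁ g₂ b₂
  rw [pAG1G2B2, sum_mul] at h
  rw [← sub_eq_zero_of_eq h.symm, ← sum_sub_distrib]
  exact sum_congr rfl fun _ _ => by ring

end Regressions

section Expectations

variable (p : Y × A × G₁ × G₂ × B₂ → ℝ) [Fintype A] [Fintype G₁] [Fintype G₂] [Fintype B₂]

lemma sum_mul_indicator_mul [DecidableEq A] (a : A) (H : Y × A × G₁ × G₂ × B₂ → ℝ) :
    ∑ o, p o * ((if o.2.1 = a then 1 else 0) * H o) =
      ∑ g₁, ∑ g₂, ∑ b₂, ∑ y, p (y, a, g₁, g₂, b₂) * H (y, a, g₁, g₂, b₂) := by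
  rw [sum_obs_eq_sum_g₁_g₂_b₂_a_y]
  simp only [ite_mul, one_mul, zero_mul, mul_ite, mul_zero, sum_ite_irrel, sum_const_zero,
    sum_ite_eq', mem_univ, if_true]

lemma sum_mul_indicator_mul_eq_sum_pAG1G2B2_mul [DecidableEq A] (a : A)
    (F : G₁ → G₂ → B₂ → ℝ) :
    ∑ o, p o * ((if o.2.1 = a then 1 else 0) * F o.2.2.1 o.2.2.2.1 o.2.2.2.2) =
      ∑ g₁, ∑ g₂, ∑ b₂, pAG1G2B2 p a g₁ g₂ b₂ * F g₁ g₂ b₂ := by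
  simp only [sum_mul_indicator_mul, pAG1G2B2, sum_mul]

lemma sum_mul_indicator_mul_residual_eq_zero [DecidableEq A] [Nonempty Y]
    (hpos : ∀ o, 0 < p o) (a : A) (F : G₁ → G₂ → B₂ → ℝ) :
    ∑ o, p o * ((if o.2.1 = a then 1 else 0) *
      (((o.1 : ℝ) - m2 p a o.2.2.1 o.2.2.2.1 o.2.2.2.2) * F o.2.2.1 o.2.2.2.1 o.2.2.2.2)) = 0 := by
  rw [sum_mul_indicator_mul]
  refine sum_eq_zero fun g₁ _ => sum_eq_zero fun g₂ _ => sum_eq_zero fun b₂ _ => ?_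
  simp only [← mul_assoc, ← sum_mul, sum_mul_sub_m2 p hpos, zero_mul]

lemma sum_mul_eq_sum_pG1G2B2_mul (F : G₁ → G₂ → B₂ → ℝ) :
    ∑ o, p o * F o.2.2.1 o.2.2.2.1 o.2.2.2.2 =
      ∑ g₁, ∑ g₂, ∑ b₂, pG1G2B2 p g₁ g₂ b₂ * F g₁ g₂ b₂ := by
  simp only [sum_obs_eq_sum_g₁_g₂_b₂_a_y, pG1G2B2, pAG1G2B2, sum_mul]

end Expectations

noncomputable def regressionGap [Fintype A] [Fintype G₁] [Fintype G₂] [Fintype B₂]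
    (p : Y × A × G₁ × G₂ × B₂ → ℝ) (a : A) (g₂ : G₂) (b₂ : B₂) : ℝ :=
  ∑ g₁, pG1 p g₁ * (m1 p a g₁ b₂ - m2 p a g₁ g₂ b₂)

-- The value at `(g₁, g₂, b₂)` of `∑_{y, a'} p · (ψ₁ − ψ₂)`, by
-- `CI_G2_AG1_B2.sum_mul_psi1_sub_psi2_mul`.
noncomputable def psiDiffMarginal [Fintype A] [Fintype G₁] [Fintype G₂] [Fintype B₂]
    (p : Y × A × G₁ × G₂ × B₂ → ℝ) (a : A) (g₁ : G₁) (g₂ : G₂) (b₂ : B₂) : ℝ :=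
  pG1 p g₁ * pG2B2 p g₂ b₂ * (m2 p a g₁ g₂ b₂ - m1 p a g₁ b₂) +
    pG1G2B2 p g₁ g₂ b₂ * regressionGap p a g₂ b₂

lemma sum_psiDiffMarginal [Fintype A] [Fintype G₁] [Fintype G₂] [Fintype B₂]
    (p : Y × A × G₁ × G₂ × B₂ → ℝ) (a : A) (g₂ : G₂) (b₂ : B₂) :
    ∑ g₁, psiDiffMarginal p a g₁ g₂ b₂ = 0 := by
  simp only [psiDiffMarginal, sum_add_distrib, ← sum_mul, sum_pG1G2B2, regressionGap]
  rw [mul_sum, ← sum_add_distrib]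
  exact sum_eq_zero fun _ _ => by ring

lemma sum_psiDiffMarginal_mul_right [Fintype A] [Fintype G₁] [Fintype G₂] [Fintype B₂]
    (p : Y × A × G₁ × G₂ × B₂ → ℝ) (a : A) (d : G₂ → B₂ → ℝ) :
    ∑ g₁, ∑ g₂, ∑ b₂, psiDiffMarginal p a g₁ g₂ b₂ * d g₂ b₂ = 0 := by
  rw [sum_comm]
  refine sum_eq_zero fun g₂ _ => ?_
  rw [sum_comm]
  exact sum_eq_zero fun b₂ _ => by rw [← sum_mul, sum_psiDiffMarginal, zero_mul]

namespace CI_G2_AG1_B2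

variable {p : Y × A × G₁ × G₂ × B₂ → ℝ} [Fintype A] [Fintype G₁] [Fintype G₂]

theorem pAG1G2B2_mul_pB2 [Nonempty Y] (hCI : CI_G2_AG1_B2 p) (hpos : ∀ o, 0 < p o) (a : A)
    (g₁ : G₁) (g₂ : G₂) (b₂ : B₂) :
    pAG1G2B2 p a g₁ g₂ b₂ * pB2 p b₂ = pG2B2 p g₂ b₂ * pAG1B2 p a g₁ b₂ := by
  have : Nonempty A := ⟨a⟩
  have : Nonempty G₁ := ⟨g₁⟩
  have : Nonempty G₂ := ⟨g₂⟩
  have hb := (pB2_pos p hpos b₂).ne'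
  have h := hCI g₂ a g₁ b₂
  rw [div_eq_iff hb] at h
  rw [pAG1G2B2, h]
  field_simp

theorem pB2_mul_sum_pAG1G2B2_mul [Nonempty Y] (hCI : CI_G2_AG1_B2 p) (hpos : ∀ o, 0 < p o)
    (a : A) (g₁ : G₁) (b₂ : B₂) (φ : G₂ → ℝ) :
    pB2 p b₂ * ∑ g₂, pAG1G2B2 p a g₁ g₂ b₂ * φ g₂ =
      pAG1B2 p a g₁ b₂ * ∑ g₂, pG2B2 p g₂ b₂ * φ g₂ := by
  simp only [mul_sum]
  exact sum_congr rfl fun g₂ _ => by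
    linear_combination φ g₂ * hCI.pAG1G2B2_mul_pB2 hpos a g₁ g₂ b₂

theorem pB2_mul_m1 [Nonempty Y] [Nonempty G₂] (hCI : CI_G2_AG1_B2 p) (hpos : ∀ o, 0 < p o)
    (a : A) (g₁ : G₁) (b₂ : B₂) :
    pB2 p b₂ * m1 p a g₁ b₂ = ∑ g₂, pG2B2 p g₂ b₂ * m2 p a g₁ g₂ b₂ := by
  refine mul_left_cancel₀ (pAG1B2_pos p hpos a g₁ b₂).ne' ?_
  rw [mul_left_comm, pAG1B2_mul_m1 p hpos, hCI.pB2_mul_sum_pAG1G2B2_mul hpos]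

theorem sum_pG2B2_mul_m2_sub_m1 [Nonempty Y] [Nonempty G₂] (hCI : CI_G2_AG1_B2 p)
    (hpos : ∀ o, 0 < p o) (a : A) (g₁ : G₁) (b₂ : B₂) :
    ∑ g₂, pG2B2 p g₂ b₂ * (m2 p a g₁ g₂ b₂ - m1 p a g₁ b₂) = 0 := by
  simp only [mul_sub, sum_sub_distrib, ← sum_mul, sum_pG2B2, hCI.pB2_mul_m1 hpos, sub_self]

section

variable [Fintype B₂]

theorem sum_pG2B2_mul_regressionGap [Nonempty Y] [Nonempty G₂]
    (hCI : CI_G2_AG1_B2 p) (hpos : ∀ o, 0 < p o) (a : A) (b₂ : B₂) :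
    ∑ g₂, pG2B2 p g₂ b₂ * regressionGap p a g₂ b₂ = 0 := by
  simp only [regressionGap, mul_sum]
  rw [sum_comm]
  refine sum_eq_zero fun g₁ _ => ?_
  calc ∑ g₂, pG2B2 p g₂ b₂ * (pG1 p g₁ * (m1 p a g₁ b₂ - m2 p a g₁ g₂ b₂))
      = -pG1 p g₁ * ∑ g₂, pG2B2 p g₂ b₂ * (m2 p a g₁ g₂ b₂ - m1 p a g₁ b₂) := by
        rw [mul_sum]
        exact sum_congr rfl fun _ _ => by ring
    _ = 0 := by rw [hCI.sum_pG2B2_mul_m2_sub_m1 hpos, mul_zero]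

theorem sum_pG1G2B2_mul_regressionGap [Nonempty Y] [Nonempty G₂]
    (hCI : CI_G2_AG1_B2 p) (hpos : ∀ o, 0 < p o) (a : A) (g₁ : G₁) (b₂ : B₂) :
    ∑ g₂, pG1G2B2 p g₁ g₂ b₂ * regressionGap p a g₂ b₂ = 0 := by
  have : Nonempty A := ⟨a⟩
  have : Nonempty G₁ := ⟨g₁⟩
  refine (mul_eq_zero.mp ?_).resolve_left (pB2_pos p hpos b₂).ne'
  simp only [pG1G2B2, sum_mul, mul_sum]
  rw [sum_comm]
  refine sum_eq_zero fun a' _ => ?_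
  rw [← mul_sum, hCI.pB2_mul_sum_pAG1G2B2_mul hpos a' g₁ b₂ (regressionGap p a · b₂),
    hCI.sum_pG2B2_mul_regressionGap hpos a b₂, mul_zero]

theorem pG1_mul_pG2B2_div_pAG1G2B2 [Nonempty Y] (hCI : CI_G2_AG1_B2 p)
    (hpos : ∀ o, 0 < p o) (a : A) (g₁ : G₁) (g₂ : G₂) (b₂ : B₂) :
    pG1 p g₁ * pG2B2 p g₂ b₂ / pAG1G2B2 p a g₁ g₂ b₂ = pG1 p g₁ * pB2 p b₂ / pAG1B2 p a g₁ b₂ := by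
  have : Nonempty G₂ := ⟨g₂⟩
  rw [div_eq_div_iff (pAG1G2B2_pos p hpos a g₁ g₂ b₂).ne' (pAG1B2_pos p hpos a g₁ b₂).ne']
  linear_combination -pG1 p g₁ * hCI.pAG1G2B2_mul_pB2 hpos a g₁ g₂ b₂

theorem sum_pB2_mul_m1 [Nonempty Y] [Nonempty G₂] (hCI : CI_G2_AG1_B2 p)
    (hpos : ∀ o, 0 < p o) (a : A) (g₁ : G₁) :
    ∑ b₂, pB2 p b₂ * m1 p a g₁ b₂ = ∑ g₂, ∑ b₂, pG2B2 p g₂ b₂ * m2 p a g₁ g₂ b₂ := by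
  simp only [hCI.pB2_mul_m1 hpos]
  exact sum_comm

theorem T1_eq_T2 [Nonempty Y] [Nonempty G₂] (hCI : CI_G2_AG1_B2 p)
    (hpos : ∀ o, 0 < p o) (a : A) : T1 p a = T2 p a := by
  simp only [T1, T2, hCI.sum_pB2_mul_m1 hpos]

theorem psi1_sub_psi2 [DecidableEq A] [Nonempty Y] [Nonempty G₂]
    (hCI : CI_G2_AG1_B2 p) (hpos : ∀ o, 0 < p o) (a : A) (y : Y) (a' : A) (g₁ : G₁) (g₂ : G₂)
    (b₂ : B₂) :
    psi1 p a y a' g₁ b₂ - psi2 p a y a' g₁ g₂ b₂ =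
      (if a' = a then 1 else 0) * (pG1 p g₁ * pG2B2 p g₂ b₂ / pAG1G2B2 p a g₁ g₂ b₂) *
        (m2 p a g₁ g₂ b₂ - m1 p a g₁ b₂) + regressionGap p a g₂ b₂ := by
  simp only [psi1, psi2, hCI.sum_pB2_mul_m1 hpos, hCI.T1_eq_T2 hpos,
    hCI.pG1_mul_pG2B2_div_pAG1G2B2 hpos, regressionGap, mul_sub, sum_sub_distrib]
  ring

theorem sum_psiDiffMarginal_mul_left [Nonempty Y] [Nonempty G₂] (hCI : CI_G2_AG1_B2 p)
    (hpos : ∀ o, 0 < p o) (a : A) (c : G₁ → ℝ) :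
    ∑ g₁, ∑ g₂, ∑ b₂, psiDiffMarginal p a g₁ g₂ b₂ * c g₁ = 0 := by
  refine sum_eq_zero fun g₁ _ => ?_
  rw [sum_comm]
  refine sum_eq_zero fun b₂ _ => ?_
  calc ∑ g₂, psiDiffMarginal p a g₁ g₂ b₂ * c g₁
      = c g₁ * (pG1 p g₁ * ∑ g₂, pG2B2 p g₂ b₂ * (m2 p a g₁ g₂ b₂ - m1 p a g₁ b₂) +
          ∑ g₂, pG1G2B2 p g₁ g₂ b₂ * regressionGap p a g₂ b₂) := by
        rw [mul_sum, mul_add, mul_sum, mul_sum, ← sum_add_distrib]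
        exact sum_congr rfl fun _ _ => by rw [psiDiffMarginal]; ring
    _ = 0 := by
        rw [hCI.sum_pG2B2_mul_m2_sub_m1 hpos, hCI.sum_pG1G2B2_mul_regressionGap hpos]
        ring

theorem sum_mul_psi1_sub_psi2_mul [DecidableEq A] [Nonempty Y] [Nonempty G₂]
    (hCI : CI_G2_AG1_B2 p) (hpos : ∀ o, 0 < p o) (a : A) (φ : G₁ → G₂ → B₂ → ℝ) :
    ∑ o, p o * ((psi1 p a o.1 o.2.1 o.2.2.1 o.2.2.2.2 -
        psi2 p a o.1 o.2.1 o.2.2.1 o.2.2.2.1 o.2.2.2.2) * φ o.2.2.1 o.2.2.2.1 o.2.2.2.2) =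
      ∑ g₁, ∑ g₂, ∑ b₂, psiDiffMarginal p a g₁ g₂ b₂ * φ g₁ g₂ b₂ := by
  simp only [hCI.psi1_sub_psi2 hpos, add_mul, mul_add, sum_add_distrib, mul_assoc]
  rw [sum_mul_indicator_mul_eq_sum_pAG1G2B2_mul p a (fun g₁ g₂ b₂ =>
      pG1 p g₁ * pG2B2 p g₂ b₂ / pAG1G2B2 p a g₁ g₂ b₂ *
        ((m2 p a g₁ g₂ b₂ - m1 p a g₁ b₂) * φ g₁ g₂ b₂)),
    sum_mul_eq_sum_pG1G2B2_mul p (fun g₁ g₂ b₂ => regressionGap p a g₂ b₂ * φ g₁ g₂ b₂)]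
  simp only [← sum_add_distrib]
  refine sum_congr rfl fun g₁ _ => sum_congr rfl fun g₂ _ => sum_congr rfl fun b₂ _ => ?_
  have := (pAG1G2B2_pos p hpos a g₁ g₂ b₂).ne'
  rw [psiDiffMarginal]
  field_simp

section

variable [DecidableEq A] [Nonempty Y] [Nonempty G₂]

theorem sum_mul_psi1_sub_psi2_mul_residual (hCI : CI_G2_AG1_B2 p) (hpos : ∀ o, 0 < p o)
    (a : A) :
    ∑ o, p o * ((psi1 p a o.1 o.2.1 o.2.2.1 o.2.2.2.2 -
        psi2 p a o.1 o.2.1 o.2.2.1 o.2.2.2.1 o.2.2.2.2) *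
      ((if o.2.1 = a then 1 else 0) *
        (pG1 p o.2.2.1 * pG2B2 p o.2.2.2.1 o.2.2.2.2 / pAG1G2B2 p a o.2.2.1 o.2.2.2.1 o.2.2.2.2) *
        ((o.1 : ℝ) - m2 p a o.2.2.1 o.2.2.2.1 o.2.2.2.2))) = 0 := by
  refine (sum_congr rfl fun o _ => ?_).trans
    (sum_mul_indicator_mul_residual_eq_zero p hpos a fun g₁ g₂ b₂ =>
      pG1 p g₁ * pG2B2 p g₂ b₂ / pAG1G2B2 p a g₁ g₂ b₂ *
        (pG1 p g₁ * pG2B2 p g₂ b₂ / pAG1G2B2 p a g₁ g₂ b₂ * (m2 p a g₁ g₂ b₂ - m1 p a g₁ b₂) +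
          regressionGap p a g₂ b₂))
  rw [hCI.psi1_sub_psi2 hpos]
  split_ifs <;> ring

theorem sum_mul_psi1_sub_psi2 (hCI : CI_G2_AG1_B2 p) (hpos : ∀ o, 0 < p o) (a : A) :
    ∑ o, p o * (psi1 p a o.1 o.2.1 o.2.2.1 o.2.2.2.2 -
      psi2 p a o.1 o.2.1 o.2.2.1 o.2.2.2.1 o.2.2.2.2) = 0 := by
  simpa using (hCI.sum_mul_psi1_sub_psi2_mul hpos a fun _ _ _ => 1).trans
    (sum_psiDiffMarginal_mul_right p a fun _ _ => 1)

theorem sum_mul_psi2_mul_psi1_sub_psi2 (hCI : CI_G2_AG1_B2 p) (hpos : ∀ o, 0 < p o) (a : A) :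
    ∑ o, p o * (psi2 p a o.1 o.2.1 o.2.2.1 o.2.2.2.1 o.2.2.2.2 *
      (psi1 p a o.1 o.2.1 o.2.2.1 o.2.2.2.2 - psi2 p a o.1 o.2.1 o.2.2.1 o.2.2.2.1 o.2.2.2.2)) =
      0 := by
  let c : G₁ → ℝ := fun g₁ => ∑ g₂, ∑ b₂, pG2B2 p g₂ b₂ * m2 p a g₁ g₂ b₂
  let d : G₂ → B₂ → ℝ := fun g₂ b₂ => ∑ g₁, pG1 p g₁ * m2 p a g₁ g₂ b₂ - 2 * T2 p a
  have hsplit : ∀ o : Y × A × G₁ × G₂ × B₂, psi2 p a o.1 o.2.1 o.2.2.1 o.2.2.2.1 o.2.2.2.2 =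
      (if o.2.1 = a then 1 else 0) *
        (pG1 p o.2.2.1 * pG2B2 p o.2.2.2.1 o.2.2.2.2 / pAG1G2B2 p a o.2.2.1 o.2.2.2.1 o.2.2.2.2) *
        ((o.1 : ℝ) - m2 p a o.2.2.1 o.2.2.2.1 o.2.2.2.2) + (c o.2.2.1 + d o.2.2.2.1 o.2.2.2.2) :=
    fun o => by rw [psi2]; ring
  have hcd : _ = (0 : ℝ) :=
    (hCI.sum_mul_psi1_sub_psi2_mul hpos a fun g₁ g₂ b₂ => c g₁ + d g₂ b₂).trans <| by
      simp only [mul_add, sum_add_distrib, hCI.sum_psiDiffMarginal_mul_left hpos,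
        sum_psiDiffMarginal_mul_right, add_zero]
  refine Eq.trans ?_ ((congrArg₂ (· + ·) (hCI.sum_mul_psi1_sub_psi2_mul_residual hpos a) hcd).trans
    (add_zero 0))
  rw [← sum_add_distrib]
  exact sum_congr rfl fun o _ => by rw [hsplit o]; ring

end

end

end CI_G2_AG1_B2

lemma VarP_eq_add_of_sum_mul_eq_zero [Fintype A] [Fintype G₁] [Fintype G₂] [Fintype B₂]
    (p f g : Y × A × G₁ × G₂ × B₂ → ℝ) (hmean : ∑ o, p o * (f o - g o) = 0)
    (hcross : ∑ o, p o * (g o * (f o - g o)) = 0) :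
    VarP p f = VarP p g + VarP p (fun o => f o - g o) := by
  have hsq : ∑ o, p o * f o ^ 2 =
      ∑ o, p o * g o ^ 2 + ∑ o, p o * (f o - g o) ^ 2 + 2 * ∑ o, p o * (g o * (f o - g o)) := by
    rw [mul_sum, ← sum_add_distrib, ← sum_add_distrib]
    exact sum_congr rfl fun o _ => by ring
  have hlin : ∑ o, p o * f o = ∑ o, p o * g o + ∑ o, p o * (f o - g o) := by
    rw [← sum_add_distrib]
    exact sum_congr rfl fun o _ => by ring
  simp only [VarP, hsq, hlin, hmean, hcross]
  ring

lemma VarP_nonneg_of_sum_mul_eq_zero [Fintype A] [Fintype G₁] [Fintype G₂] [Fintype B₂]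
    {p : Y × A × G₁ × G₂ × B₂ → ℝ} (hp : ∀ o, 0 ≤ p o) {f : Y × A × G₁ × G₂ × B₂ → ℝ}
    (hf : ∑ o, p o * f o = 0) : 0 ≤ VarP p f := by
  rw [VarP, hf, sq, mul_zero, sub_zero]
  exact sum_nonneg fun o _ => mul_nonneg (hp o) (sq_nonneg _)

variable [Fintype A] [Fintype G₁] [Fintype G₂] [Fintype B₂] [DecidableEq A]

theorem variance_decomposition_supplement_backdoor_general
    (p : Y × A × G₁ × G₂ × B₂ → ℝ)
    (hpos : ∀ o, 0 < p o) (a : A)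
    (hCI : CI_G2_AG1_B2 p) :
    (VarP p (fun o => psi1 p a o.1 o.2.1 o.2.2.1 o.2.2.2.2) =
      VarP p (fun o => psi2 p a o.1 o.2.1 o.2.2.1 o.2.2.2.1 o.2.2.2.2) +
        VarP p (fun o => psi1 p a o.1 o.2.1 o.2.2.1 o.2.2.2.2 -
          psi2 p a o.1 o.2.1 o.2.2.1 o.2.2.2.1 o.2.2.2.2)) ∧
    VarP p (fun o => psi1 p a o.1 o.2.1 o.2.2.1 o.2.2.2.2) ≥
      VarP p (fun o => psi2 p a o.1 o.2.1 o.2.2.1 o.2.2.2.1 o.2.2.2.2) := by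
  rcases isEmpty_or_nonempty (Y × A × G₁ × G₂ × B₂) with hempty | ⟨y, -, -, g₂, -⟩
  · simp [VarP]
  have : Nonempty Y := ⟨y⟩
  have : Nonempty G₂ := ⟨g₂⟩
  have hmean := hCI.sum_mul_psi1_sub_psi2 hpos a
  have hdecomp := VarP_eq_add_of_sum_mul_eq_zero p _ _ hmean
    (hCI.sum_mul_psi2_mul_psi1_sub_psi2 hpos a)
  exact ⟨hdecomp, hdecomp ▸ le_add_of_nonneg_right
    (VarP_nonneg_of_sum_mul_eq_zero (fun o => (hpos o).le) hmean)⟩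

/-- Lemma 4.1 (supplement of backdoor variables), discrete form: under
`G₂ ⊥ (A, G₁) | B₂`, the variance of `ψ_a^{G₁,B₂}` decomposes as the
variance of `ψ_a^{G₁,(G₂,B₂)}` plus the variance of the difference; in
particular the larger adjustment set has no larger asymptotic variance. -/
theorem variance_decomposition_supplement_backdoor
    (p : Y × A × G₁ × G₂ × B₂ → ℝ)
    (hpos : ∀ o, 0 < p o) (hsum : ∑ o, p o = 1) (a : A)
    (hCI : CI_G2_AG1_B2 p) :
    (VarP p (fun o => psi1 p a o.1 o.2.1 o.2.2.1 o.2.2.2.2) =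
      VarP p (fun o => psi2 p a o.1 o.2.1 o.2.2.1 o.2.2.2.1 o.2.2.2.2) +
        VarP p (fun o => psi1 p a o.1 o.2.1 o.2.2.1 o.2.2.2.2 -
          psi2 p a o.1 o.2.1 o.2.2.1 o.2.2.2.1 o.2.2.2.2)) ∧
    VarP p (fun o => psi1 p a o.1 o.2.1 o.2.2.1 o.2.2.2.2) ≥
      VarP p (fun o => psi2 p a o.1 o.2.1 o.2.2.1 o.2.2.2.1 o.2.2.2.2) :=
  variance_decomposition_supplement_backdoor_general p hpos a hCI
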